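/- Under the hypotheses of the splitting theorem for S̃ = Σ_i (λ_i a_i b_i + Σ_j σ_{i,j} a_i u_{i,j} + b_i v_i) + W with no related arrows, the potential obtained by 'integration over massive arrows' — substituting b_i = −(1/λ_i) Σ_j σ_{i,j} u_{i,j} and a_i = −(1/λ_i) v_i using the relations ∂S̃/∂a_i = 0 and ∂S̃/∂b_i = 0 — equals the reduced part of φ(S̃), namely Σ_i (−1/λ_i) Σ_j σ_{i,j} u_{i,j} v_i + W. -/

import Mathlib

/-- A quiver given by a vertex set, an arrow set and source/target maps. -/
structure Quiv where
  V : Type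
  E : Type
  s : E → V
  t : E → V

namespace Quiv

/-- A path `a₁ a₂ ⋯ aₙ`, written with the composition-of-functions convention,
is a list of arrows such that the source of each arrow is the target of the next one. -/
def IsPath (q : Quiv) : List q.E → Prop
  | [] => True
  | [_] => True
  | a :: b :: l => q.s a = q.t b ∧ IsPath q (b :: l)

variable (q : Quiv)

/-- The source of a (nonempty) path. -/
def pSrc (l : List q.E) : Option q.V := l.getLast?.map q.s

/-- The target of a (nonempty) path. -/
def pTgt (l : List q.E) : Option q.V := l.head?.map q.t

/-- A cycle is a nonempty path whose source equals its target. -/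
def IsCycle (l : List q.E) : Prop := l ≠ [] ∧ q.IsPath l ∧ q.pSrc l = q.pTgt l

variable (K : Type) [Field K]

open Classical in
/-- The cyclic derivative of a single cycle `a₁ ⋯ aₙ` with respect to an arrow `x`:
`∑ₖ δ(x, aₖ) • a_{k+1} ⋯ aₙ a₁ ⋯ a_{k-1}`, as an element of the vector space
spanned by paths. -/
noncomputable def cycDerList (x : q.E) (l : List q.E) : List q.E →₀ K :=
  ∑ k ∈ Finset.range l.length,
    if l[k]? = some x then Finsupp.single (l.drop (k + 1) ++ l.take k) 1 else 0

/-- The cyclic derivative of a potential (a linear combination of cycles)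
with respect to an arrow `x`, extended linearly. -/
noncomputable def cycDer (x : q.E) (S : List q.E →₀ K) : List q.E →₀ K :=
  S.sum fun l c => c • q.cycDerList K x l

/-- Two potentials are cyclically equivalent if their difference lies in the span of
the elements `a₁ ⋯ a_{n-1} aₙ - a₂ ⋯ aₙ a₁` for cycles `a₁ ⋯ aₙ`. -/
def CycEquiv (S S' : List q.E →₀ K) : Prop :=
  S - S' ∈ Submodule.span K
    {x : List q.E →₀ K | ∃ l : List q.E, q.IsCycle l ∧
      x = Finsupp.single l 1 - Finsupp.single (l.rotate 1) 1}

end Quiv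

namespace Quiv

variable (q : Quiv) (K : Type) [Field K]

/-- Substitution of linear combinations of paths for arrows, extended multiplicatively
to a single path (concatenation of lists corresponds to composition of paths). -/
noncomputable def substList (f : q.E → (List q.E →₀ K)) : List q.E → (List q.E →₀ K)
  | [] => Finsupp.single [] 1
  | e :: l =>
      (f e).sum fun le ce =>
        (substList f l).sum fun lr cr => Finsupp.single (le ++ lr) (ce * cr)

/-- The algebra endomorphism of the path algebra determined by a substitution rule
`f` on arrows (fixing the vertex idempotents), applied to a potential. -/
noncomputable def subst (f : q.E → (List q.E →₀ K)) (S : List q.E →₀ K) :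
    List q.E →₀ K :=
  S.sum fun l c => c • q.substList K f l

end Quiv

/-!
In the free algebra `K⟨E⟩ = K[FreeMonoid E]` a substitution rule is an algebra endomorphism, and
the arrows off the massive 2-cycles are fixed by both rules. Writing `X = Σⱼ σⱼ uⱼ`, the
substitution `a ↦ A - λ⁻¹ v`, `b ↦ B - λ⁻¹ X` sends `λ a b + a X + b v` to
`λ A B - λ⁻¹ X v + (B v - v B)`, a noncommutative identity. With `A = B = 0` this is integration
over the massive arrows; with `A = a`, `B = b` it is `φ`, and `b v - v b` is the difference of
the cycle `b v` and its rotation, hence cyclically equivalent to zero.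
-/

namespace Quiv

variable {q : Quiv} {K : Type} [Field K]

/-- Potentials are computed in the free algebra `K⟨E⟩`: the product of two paths is their
concatenation, whether or not the arrows compose, exactly as in `substList`. -/
abbrev FreeAlg (q : Quiv) (K : Type) [Field K] : Type := MonoidAlgebra K (FreeMonoid q.E)

noncomputable def arrow (x : q.E) : FreeAlg q K := MonoidAlgebra.of K _ (FreeMonoid.of x)

noncomputable def word (l : List q.E) : FreeAlg q K := MonoidAlgebra.of K _ (FreeMonoid.ofList l)

@[simp]
theorem word_nil : (word [] : FreeAlg q K) = 1 := map_one _

@[simp]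
theorem word_cons (x : q.E) (l : List q.E) :
    (word (x :: l) : FreeAlg q K) = arrow x * word l := by
  rw [word, FreeMonoid.ofList_cons, map_mul]; rfl

theorem word_append (l₁ l₂ : List q.E) :
    (word (l₁ ++ l₂) : FreeAlg q K) = word l₁ * word l₂ := by
  rw [word, FreeMonoid.ofList_append, map_mul]; rfl

noncomputable def toFreeAlg : (List q.E →₀ K) ≃ₗ[K] FreeAlg q K :=
  (Finsupp.domLCongr FreeMonoid.ofList).trans (MonoidAlgebra.coeffLinearEquiv K).symm

theorem toFreeAlg_single (l : List q.E) (c : K) :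
    toFreeAlg (Finsupp.single l c) = c • (word l : FreeAlg q K) := by
  simp [toFreeAlg, word]

theorem toFreeAlg_eq_sum (S : List q.E →₀ K) :
    toFreeAlg S = S.sum fun l c => c • (word l : FreeAlg q K) := by
  conv_lhs => rw [← Finsupp.sum_single S]
  simp only [map_finsuppSum, toFreeAlg_single]

theorem toFreeAlg_substList (f : q.E → (List q.E →₀ K)) (l : List q.E) :
    toFreeAlg (q.substList K f l) = (l.map fun x => toFreeAlg (f x)).prod := by
  induction l with
  | nil => simp [substList, toFreeAlg_single]
  | cons e l ih =>
    rw [substList, List.map_cons, List.prod_cons, ← ih, toFreeAlg_eq_sum (f e),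
      toFreeAlg_eq_sum (q.substList K f l), Finsupp.sum_mul]
    simp only [Finsupp.mul_sum, map_finsuppSum, toFreeAlg_single, word_append,
      smul_mul_smul_comm]

noncomputable def substAlgHom (f : q.E → (List q.E →₀ K)) : FreeAlg q K →ₐ[K] FreeAlg q K :=
  MonoidAlgebra.lift K (FreeAlg q K) (FreeMonoid q.E) (FreeMonoid.lift fun x => toFreeAlg (f x))

@[simp]
theorem substAlgHom_arrow (f : q.E → (List q.E →₀ K)) (x : q.E) :
    substAlgHom f (arrow x) = toFreeAlg (f x) := by
  rw [substAlgHom, arrow, MonoidAlgebra.lift_of, FreeMonoid.lift_eval_of]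

theorem substAlgHom_word (f : q.E → (List q.E →₀ K)) (l : List q.E) :
    substAlgHom f (word l) = (l.map fun x => toFreeAlg (f x)).prod := by
  rw [substAlgHom, word, MonoidAlgebra.lift_of, FreeMonoid.lift_ofList]

theorem toFreeAlg_subst (f : q.E → (List q.E →₀ K)) (S : List q.E →₀ K) :
    toFreeAlg (q.subst K f S) = substAlgHom f (toFreeAlg S) := by
  rw [toFreeAlg_eq_sum S, map_finsuppSum, subst, map_finsuppSum]
  simp only [map_smul, toFreeAlg_substList, substAlgHom_word]

theorem substAlgHom_word_of_forall_mem {f : q.E → (List q.E →₀ K)} {l : List q.E}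
    (hl : ∀ x ∈ l, f x = Finsupp.single [x] 1) : substAlgHom f (word l) = word l := by
  induction l with
  | nil => simp
  | cons x l ih =>
    rw [word_cons, map_mul, substAlgHom_arrow, hl x List.mem_cons_self, toFreeAlg_single,
      ih fun y hy => hl y (List.mem_cons_of_mem x hy)]
    simp

theorem subst_eq_self {f : q.E → (List q.E →₀ K)} {S : List q.E →₀ K}
    (hS : ∀ l ∈ S.support, ∀ x ∈ l, f x = Finsupp.single [x] 1) : q.subst K f S = S :=
  toFreeAlg.injective <| by
    rw [toFreeAlg_subst, toFreeAlg_eq_sum, map_finsuppSum]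
    refine Finsupp.sum_congr fun l hl => ?_
    rw [map_smul, substAlgHom_word_of_forall_mem (hS l hl)]

theorem subst_add (f : q.E → (List q.E →₀ K)) (S T : List q.E →₀ K) :
    q.subst K f (S + T) = q.subst K f S + q.subst K f T :=
  toFreeAlg.injective <| by simp only [toFreeAlg_subst, map_add]

theorem subst_sum {ι : Type*} (f : q.E → (List q.E →₀ K)) (s : Finset ι)
    (S : ι → List q.E →₀ K) : q.subst K f (∑ i ∈ s, S i) = ∑ i ∈ s, q.subst K f (S i) :=
  toFreeAlg.injective <| by simp only [toFreeAlg_subst, map_sum]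

theorem shift_massive_terms {R : Type*} [Ring R] [Algebra K R] {lam : K} (hlam : lam ≠ 0)
    (A B V X : R) :
    lam • ((A - lam⁻¹ • V) * (B - lam⁻¹ • X)) + (A - lam⁻¹ • V) * X + (B - lam⁻¹ • X) * V =
      lam • (A * B) - lam⁻¹ • (X * V) + (B * V - V * B) := by
  simp only [mul_sub, sub_mul, smul_mul_assoc, mul_smul_comm, smul_sub, smul_smul,
    mul_inv_cancel_left₀ hlam, mul_inv_cancel₀ hlam, one_smul]
  abel

theorem toFreeAlg_subst_massive {f : q.E → (List q.E →₀ K)} {a b : q.E} {lam : K}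
    (hlam : lam ≠ 0) {m : ℕ} (sig : Fin m → K) (u : Fin m → List q.E) (v : List q.E)
    (A B : FreeAlg q K)
    (hfa : toFreeAlg (f a) = A - lam⁻¹ • word v)
    (hfb : toFreeAlg (f b) = B - lam⁻¹ • ∑ j, sig j • word (u j))
    (hu : ∀ j, ∀ x ∈ u j, f x = Finsupp.single [x] 1) (hv : ∀ x ∈ v, f x = Finsupp.single [x] 1) :
    toFreeAlg (q.subst K f (lam • Finsupp.single [a, b] 1
        + ∑ j, sig j • Finsupp.single (a :: u j) 1 + Finsupp.single (b :: v) 1)) =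
      lam • (A * B) - lam⁻¹ • ∑ j, sig j • word (u j ++ v) + (B * word v - word v * B) := by
  have hU : ∀ j, substAlgHom f (word (u j)) = word (u j) :=
    fun j => substAlgHom_word_of_forall_mem (hu j)
  simp only [toFreeAlg_subst, map_add, map_sum, map_smul, toFreeAlg_single, one_smul, word_cons,
    word_nil, mul_one, map_mul, substAlgHom_arrow, hfa, hfb, hU,
    substAlgHom_word_of_forall_mem hv, word_append]
  convert shift_massive_terms hlam A B (word v) (∑ j, sig j • word (u j)) using 3
  · simp only [Finset.mul_sum, mul_smul_comm]
  · simp only [Finset.sum_mul, smul_mul_assoc]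

section Massive

variable {a b : q.E} {lam : K} {m : ℕ} {sig : Fin m → K} {u : Fin m → List q.E} {v : List q.E}

theorem subst_massive_of_integration (hlam : lam ≠ 0) {g : q.E → (List q.E →₀ K)}
    (hga : g a = -lam⁻¹ • Finsupp.single v 1)
    (hgb : g b = -lam⁻¹ • ∑ j, sig j • Finsupp.single (u j) 1)
    (hu : ∀ j, ∀ x ∈ u j, g x = Finsupp.single [x] 1) (hv : ∀ x ∈ v, g x = Finsupp.single [x] 1) :
    q.subst K g (lam • Finsupp.single [a, b] 1
        + ∑ j, sig j • Finsupp.single (a :: u j) 1 + Finsupp.single (b :: v) 1) =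
      -lam⁻¹ • ∑ j, sig j • Finsupp.single (u j ++ v) 1 :=
  toFreeAlg.injective <| by
    rw [toFreeAlg_subst_massive hlam sig u v 0 0 (by simp [hga, toFreeAlg_single])
      (by simp [hgb, toFreeAlg_single]) hu hv]
    simp [toFreeAlg_single]

theorem subst_massive_of_shift (hlam : lam ≠ 0) {f : q.E → (List q.E →₀ K)}
    (hfa : f a = Finsupp.single [a] 1 - lam⁻¹ • Finsupp.single v 1)
    (hfb : f b = Finsupp.single [b] 1 - lam⁻¹ • ∑ j, sig j • Finsupp.single (u j) 1)
    (hu : ∀ j, ∀ x ∈ u j, f x = Finsupp.single [x] 1) (hv : ∀ x ∈ v, f x = Finsupp.single [x] 1) :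
    q.subst K f (lam • Finsupp.single [a, b] 1
        + ∑ j, sig j • Finsupp.single (a :: u j) 1 + Finsupp.single (b :: v) 1) =
      lam • Finsupp.single [a, b] 1 + -lam⁻¹ • ∑ j, sig j • Finsupp.single (u j ++ v) 1
        + (Finsupp.single (b :: v) 1 - Finsupp.single ((b :: v).rotate 1) 1) :=
  toFreeAlg.injective <| by
    rw [toFreeAlg_subst_massive hlam sig u v (arrow a) (arrow b) (by simp [hfa, toFreeAlg_single])
      (by simp [hfb, toFreeAlg_single]) hu hv]
    simp [toFreeAlg_single, word_append, List.rotate_cons_succ, sub_eq_add_neg]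

end Massive

theorem cycEquiv_refl (S : List q.E →₀ K) : q.CycEquiv K S S := by
  rw [CycEquiv, sub_self]
  exact Submodule.zero_mem _

theorem cycEquiv_add_sum_sub_rotate {ι : Type*} (s : Finset ι) {c : ι → List q.E}
    (hc : ∀ i ∈ s, q.IsCycle (c i)) (S : List q.E →₀ K) :
    q.CycEquiv K
      (S + ∑ i ∈ s, (Finsupp.single (c i) 1 - Finsupp.single ((c i).rotate 1) 1)) S := by
  rw [CycEquiv, add_sub_cancel_left]
  exact Submodule.sum_mem _ fun i hi => Submodule.subset_span ⟨c i, hc i hi, rfl⟩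

end Quiv

open Quiv in
theorem integration_over_massive_arrows_eq_reduced_part_general
    (q : Quiv) (K : Type) [Field K]
    (N : ℕ) (m : Fin N → ℕ)
    (a b : Fin N → q.E) (lam : Fin N → K)
    (sig : (i : Fin N) → Fin (m i) → K)
    (u : (i : Fin N) → Fin (m i) → List q.E) (v : Fin N → List q.E)
    (W : List q.E →₀ K)
    (hlam : ∀ i, lam i ≠ 0)
    (hu : ∀ i j, 2 ≤ (u i j).length ∧ q.IsCycle (a i :: u i j) ∧
      ∀ x ∈ u i j, ∀ r, x ≠ a r ∧ x ≠ b r)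
    (hv : ∀ i, 2 ≤ (v i).length ∧ q.IsCycle (b i :: v i) ∧
      ∀ x ∈ v i, ∀ r, x ≠ a r ∧ x ≠ b r)
    (hW : ∀ l ∈ W.support, q.IsCycle l ∧ ∀ x ∈ l, ∀ r, x ≠ a r ∧ x ≠ b r)
    -- the substitution rule giving integration over the massive arrows aᵢ, bᵢ
    (g : q.E → (List q.E →₀ K))
    (hga : ∀ i, g (a i) = -(lam i)⁻¹ • Finsupp.single (v i) 1)
    (hgb : ∀ i, g (b i) = -(lam i)⁻¹ • ∑ j, sig i j • Finsupp.single (u i j) 1)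
    (hgother : ∀ x : q.E, (∀ r, x ≠ a r ∧ x ≠ b r) → g x = Finsupp.single [x] 1)
    -- the substitution rule defining the right equivalence φ
    (f : q.E → (List q.E →₀ K))
    (hfa : ∀ i, f (a i) = Finsupp.single [a i] 1 - (lam i)⁻¹ • Finsupp.single (v i) 1)
    (hfb : ∀ i, f (b i) = Finsupp.single [b i] 1 -
      (lam i)⁻¹ • ∑ j, sig i j • Finsupp.single (u i j) 1)
    (hfother : ∀ x : q.E, (∀ r, x ≠ a r ∧ x ≠ b r) → f x = Finsupp.single [x] 1) :
    q.CycEquiv K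
      (q.subst K g
        (∑ i, (lam i • Finsupp.single [a i, b i] 1
          + ∑ j, sig i j • Finsupp.single (a i :: u i j) 1
          + Finsupp.single (b i :: v i) 1) + W))
      ((∑ i, (-(lam i)⁻¹) • ∑ j, sig i j • Finsupp.single (u i j ++ v i) (1 : K)) + W) ∧
    -- and this is the reduced part of φ(S̃):
    q.CycEquiv K
      (q.subst K f
        (∑ i, (lam i • Finsupp.single [a i, b i] 1
          + ∑ j, sig i j • Finsupp.single (a i :: u i j) 1
          + Finsupp.single (b i :: v i) 1) + W)
        - ∑ i, lam i • Finsupp.single [a i, b i] 1)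
      ((∑ i, (-(lam i)⁻¹) • ∑ j, sig i j • Finsupp.single (u i j ++ v i) (1 : K)) + W) := by
  have hg_fix : ∀ l : List q.E, (∀ x ∈ l, ∀ r, x ≠ a r ∧ x ≠ b r) →
      ∀ x ∈ l, g x = Finsupp.single [x] 1 := fun l hl x hx => hgother x (hl x hx)
  have hf_fix : ∀ l : List q.E, (∀ x ∈ l, ∀ r, x ≠ a r ∧ x ≠ b r) →
      ∀ x ∈ l, f x = Finsupp.single [x] 1 := fun l hl x hx => hfother x (hl x hx)
  have hg_massive := fun i => subst_massive_of_integration (hlam i) (hga i) (hgb i)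
    (fun j => hg_fix _ (hu i j).2.2) (hg_fix _ (hv i).2.2)
  have hf_massive := fun i => subst_massive_of_shift (hlam i) (hfa i) (hfb i)
    (fun j => hf_fix _ (hu i j).2.2) (hf_fix _ (hv i).2.2)
  have hgW : q.subst K g W = W := subst_eq_self fun l hl => hg_fix l (hW l hl).2
  have hfW : q.subst K f W = W := subst_eq_self fun l hl => hf_fix l (hW l hl).2
  refine ⟨?_, ?_⟩
  · rw [subst_add, subst_sum, Finset.sum_congr rfl fun i _ => hg_massive i, hgW]
    exact cycEquiv_refl _
  · rw [subst_add, subst_sum, Finset.sum_congr rfl fun i _ => hf_massive i, hfW]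
    convert cycEquiv_add_sum_sub_rotate Finset.univ (fun i _ => (hv i).2.1) _ using 1
    simp only [Finset.sum_add_distrib]
    abel

open Quiv in
/-- **integration over massive arrows.**
Under the hypotheses of the splitting theorem for
`S̃ = Σᵢ (λᵢ aᵢbᵢ + Σⱼ σᵢⱼ aᵢuᵢⱼ + bᵢvᵢ) + W` with no related arrows, the potential obtained
by integration over massive arrows — substituting `bᵢ = −λᵢ⁻¹ Σⱼ σᵢⱼ uᵢⱼ` and
`aᵢ = −λᵢ⁻¹ vᵢ` using the relations `∂S̃/∂aᵢ = 0` and `∂S̃/∂bᵢ = 0` — equals (up to cyclic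
equivalence) the reduced part of `φ(S̃)`, namely `Σᵢ (−λᵢ⁻¹) Σⱼ σᵢⱼ uᵢⱼvᵢ + W`. -/
theorem integration_over_massive_arrows_eq_reduced_part
    (q : Quiv) (K : Type) [Field K]
    (N : ℕ) (m : Fin N → ℕ)
    (a b : Fin N → q.E) (lam : Fin N → K)
    (sig : (i : Fin N) → Fin (m i) → K)
    (u : (i : Fin N) → Fin (m i) → List q.E) (v : Fin N → List q.E)
    (W : List q.E →₀ K)
    (hlam : ∀ i, lam i ≠ 0)
    (hainj : Function.Injective a) (hbinj : Function.Injective b)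
    (hab : ∀ i j, a i ≠ b j)
    (h2cyc : ∀ i, q.IsCycle [a i, b i])
    (hu : ∀ i j, 2 ≤ (u i j).length ∧ q.IsCycle (a i :: u i j) ∧
      ∀ x ∈ u i j, ∀ r, x ≠ a r ∧ x ≠ b r)
    (hv : ∀ i, 2 ≤ (v i).length ∧ q.IsCycle (b i :: v i) ∧
      ∀ x ∈ v i, ∀ r, x ≠ a r ∧ x ≠ b r)
    (hW : ∀ l ∈ W.support, q.IsCycle l ∧ ∀ x ∈ l, ∀ r, x ≠ a r ∧ x ≠ b r)
    -- the substitution rule giving integration over the massive arrows aᵢ, bᵢ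
    (g : q.E → (List q.E →₀ K))
    (hga : ∀ i, g (a i) = -(lam i)⁻¹ • Finsupp.single (v i) 1)
    (hgb : ∀ i, g (b i) = -(lam i)⁻¹ • ∑ j, sig i j • Finsupp.single (u i j) 1)
    (hgother : ∀ x : q.E, (∀ r, x ≠ a r ∧ x ≠ b r) → g x = Finsupp.single [x] 1)
    -- the substitution rule defining the right equivalence φ
    (f : q.E → (List q.E →₀ K))
    (hfa : ∀ i, f (a i) = Finsupp.single [a i] 1 - (lam i)⁻¹ • Finsupp.single (v i) 1)
    (hfb : ∀ i, f (b i) = Finsupp.single [b i] 1 -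
      (lam i)⁻¹ • ∑ j, sig i j • Finsupp.single (u i j) 1)
    (hfother : ∀ x : q.E, (∀ r, x ≠ a r ∧ x ≠ b r) → f x = Finsupp.single [x] 1) :
    q.CycEquiv K
      (q.subst K g
        (∑ i, (lam i • Finsupp.single [a i, b i] 1
          + ∑ j, sig i j • Finsupp.single (a i :: u i j) 1
          + Finsupp.single (b i :: v i) 1) + W))
      ((∑ i, (-(lam i)⁻¹) • ∑ j, sig i j • Finsupp.single (u i j ++ v i) (1 : K)) + W) ∧
    -- and this is the reduced part of φ(S̃):
    q.CycEquiv K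
      (q.subst K f
        (∑ i, (lam i • Finsupp.single [a i, b i] 1
          + ∑ j, sig i j • Finsupp.single (a i :: u i j) 1
          + Finsupp.single (b i :: v i) 1) + W)
        - ∑ i, lam i • Finsupp.single [a i, b i] 1)
      ((∑ i, (-(lam i)⁻¹) • ∑ j, sig i j • Finsupp.single (u i j ++ v i) (1 : K)) + W) :=
  integration_over_massive_arrows_eq_reduced_part_general q K N m a b lam sig u v W hlam hu hv hW g
    hga hgb hgother f hfa hfb hfother
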